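/- arXiv:math-ph/0511007 — 4 statements merged into one kernel-verified Lean document; each statement's English description precedes it below -/
import Mathlib

section
/- Let f : [0, √d/2] → ℝ be increasing and concave with f(0) ≥ 0. Define ε : ℝ^d → ℝ to be the function periodic with respect to the lattice ℤ^d such that ε(k) = f(|k|) for k ∈ [-1/2, 1/2]^d. Then ε is subadditive. -/
/-!
Let `r k` be `k` minus its coordinatewise nearest integer point, so that `ε k = f ‖r k‖`
by periodicity, and `‖r k‖ ≤ √d / 2`. Since `r (k₁ + k₂) = r (r k₁ + r k₂)` and rounding
only shrinks coordinates, `‖r (k₁ + k₂)‖ ≤ ‖r k₁ + r k₂‖ ≤ ‖r k₁‖ + ‖r k₂‖`. It remains to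
see that an increasing concave `f` with `f 0 ≥ 0` satisfies `f c ≤ f a + f b` whenever
`c ≤ a + b`: concavity between `0` and `c` gives `f x ≥ (x / c) f c` for `x ≤ c`.
-/

section Concave

variable {M : ℝ} {f : ℝ → ℝ}

lemma ConcaveOn.mul_le_apply_mul (hconc : ConcaveOn ℝ (Set.Icc 0 M) f) (hf0 : 0 ≤ f 0)
    {x t : ℝ} (hx : x ∈ Set.Icc 0 M) (ht : t ∈ Set.Icc (0 : ℝ) 1) :
    t * f x ≤ f (t * x) := by
  have h0 : (0 : ℝ) ∈ Set.Icc 0 M := ⟨le_rfl, hx.1.trans hx.2⟩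
  have h := hconc.2 h0 hx (sub_nonneg.2 ht.2) ht.1 (sub_add_cancel 1 t)
  simp only [smul_eq_mul, mul_zero, zero_add] at h
  nlinarith [mul_nonneg (sub_nonneg.2 ht.2) hf0]

lemma ConcaveOn.apply_le_add_of_le_add (hmono : MonotoneOn f (Set.Icc 0 M))
    (hconc : ConcaveOn ℝ (Set.Icc 0 M) f) (hf0 : 0 ≤ f 0) {a b c : ℝ}
    (ha : a ∈ Set.Icc 0 M) (hb : b ∈ Set.Icc 0 M) (hc : c ∈ Set.Icc 0 M) (hcab : c ≤ a + b) :
    f c ≤ f a + f b := by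
  have h0 : (0 : ℝ) ∈ Set.Icc 0 M := ⟨le_rfl, ha.1.trans ha.2⟩
  have hf_nonneg : ∀ x ∈ Set.Icc 0 M, 0 ≤ f x := fun x hx => hf0.trans (hmono h0 hx hx.1)
  rcases le_or_gt c a with hca | hac
  · exact le_add_of_le_of_nonneg (hmono hc ha hca) (hf_nonneg b hb)
  rcases le_or_gt c b with hcb | hbc
  · exact le_add_of_nonneg_of_le (hf_nonneg a ha) (hmono hc hb hcb)
  have hc_pos : 0 < c := hb.1.trans_lt hbc
  have chord : ∀ x ∈ Set.Icc 0 M, x ≤ c → x / c * f c ≤ f x := fun x hx hxc => by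
    simpa [div_mul_cancel₀ x hc_pos.ne'] using hconc.mul_le_apply_mul hf0 hc
      ⟨div_nonneg hx.1 hc_pos.le, (div_le_one hc_pos).2 hxc⟩
  have hsum : 1 ≤ a / c + b / c := by rw [← add_div, one_le_div hc_pos]; exact hcab
  nlinarith [chord a ha hac.le, chord b hb hbc.le, hf_nonneg c hc]

end Concave

section RoundResidue

variable {ι : Type*}

lemma EuclideanSpace.norm_le_norm_of_abs_le [Fintype ι] {x y : EuclideanSpace ℝ ι}
    (h : ∀ i, |x i| ≤ |y i|) : ‖x‖ ≤ ‖y‖ := by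
  rw [EuclideanSpace.norm_eq, EuclideanSpace.norm_eq]
  gcongr with i
  exact h i

noncomputable def roundResidue (k : EuclideanSpace ℝ ι) : EuclideanSpace ℝ ι :=
  WithLp.toLp 2 fun i => k i - round (k i)

@[simp]
lemma roundResidue_apply (k : EuclideanSpace ℝ ι) (i : ι) :
    roundResidue k i = k i - round (k i) := rfl

lemma abs_roundResidue_apply_le_half (k : EuclideanSpace ℝ ι) (i : ι) :
    |roundResidue k i| ≤ 1 / 2 :=
  abs_sub_round (k i)

lemma abs_roundResidue_apply_le (k : EuclideanSpace ℝ ι) (i : ι) :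
    |roundResidue k i| ≤ |k i| := by
  simpa using round_le (k i) 0

lemma roundResidue_add_roundResidue (k₁ k₂ : EuclideanSpace ℝ ι) :
    roundResidue (roundResidue k₁ + roundResidue k₂) = roundResidue (k₁ + k₂) := by
  ext i
  have hsum : (roundResidue k₁ + roundResidue k₂) i
      = (k₁ + k₂) i - ((round (k₁ i) + round (k₂ i) : ℤ) : ℝ) := by
    simp only [PiLp.add_apply, roundResidue_apply]; push_cast; ring
  rw [roundResidue_apply, hsum, round_sub_intCast, roundResidue_apply]
  push_cast
  ring

lemma norm_roundResidue_le [Fintype ι] (k : EuclideanSpace ℝ ι) :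
    ‖roundResidue k‖ ≤ √(Fintype.card ι) / 2 := by
  rw [EuclideanSpace.norm_eq]
  calc √(∑ i, ‖roundResidue k i‖ ^ 2) ≤ √(∑ _i : ι, (1 / 2 : ℝ) ^ 2) := by
        gcongr with i
        exact abs_roundResidue_apply_le_half k i
    _ = √(Fintype.card ι) / 2 := by
        rw [Finset.sum_const, Finset.card_univ, nsmul_eq_mul,
          Real.sqrt_mul (Nat.cast_nonneg _), Real.sqrt_sq (by norm_num)]
        ring

lemma norm_roundResidue_add_le [Fintype ι] (k₁ k₂ : EuclideanSpace ℝ ι) :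
    ‖roundResidue (k₁ + k₂)‖ ≤ ‖roundResidue k₁‖ + ‖roundResidue k₂‖ :=
  calc ‖roundResidue (k₁ + k₂)‖ = ‖roundResidue (roundResidue k₁ + roundResidue k₂)‖ := by
        rw [roundResidue_add_roundResidue]
    _ ≤ ‖roundResidue k₁ + roundResidue k₂‖ :=
        EuclideanSpace.norm_le_norm_of_abs_le (abs_roundResidue_apply_le _)
    _ ≤ ‖roundResidue k₁‖ + ‖roundResidue k₂‖ := norm_add_le _ _

end RoundResidue

/-- Let `f` be increasing and concave on `[0, √d/2]` with `f 0 ≥ 0`.  Let `ε : ℝ^d → ℝ`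
be periodic with respect to the lattice `ℤ^d` and satisfy `ε k = f ‖k‖` on the cube
`[-1/2, 1/2]^d`.  Then `ε` is subadditive. -/
theorem stmt_1 (d : ℕ) (f : ℝ → ℝ)
    (hmono : MonotoneOn f (Set.Icc 0 (Real.sqrt d / 2)))
    (hconc : ConcaveOn ℝ (Set.Icc 0 (Real.sqrt d / 2)) f)
    (hf0 : 0 ≤ f 0)
    (ε : EuclideanSpace ℝ (Fin d) → ℝ)
    (hper : ∀ (k m : EuclideanSpace ℝ (Fin d)),
      (∀ i, ∃ z : ℤ, m i = (z : ℝ)) → ε (k + m) = ε k)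
    (hcube : ∀ k : EuclideanSpace ℝ (Fin d),
      (∀ i, |k i| ≤ 1 / 2) → ε k = f ‖k‖)
    (k₁ k₂ : EuclideanSpace ℝ (Fin d)) :
    ε (k₁ + k₂) ≤ ε k₁ + ε k₂ := by
  have hε : ∀ k, ε k = f ‖roundResidue k‖ := fun k => by
    have h := hper (roundResidue k) (k - roundResidue k) fun i => ⟨round (k i), by simp⟩
    rw [add_sub_cancel] at h
    rw [h, hcube _ (abs_roundResidue_apply_le_half k)]
  have hmem : ∀ k, ‖roundResidue k‖ ∈ Set.Icc 0 (Real.sqrt d / 2) := fun k =>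
    ⟨norm_nonneg _, (norm_roundResidue_le k).trans_eq (by rw [Fintype.card_fin])⟩
  rw [hε, hε, hε]
  exact hconc.apply_le_add_of_le_add hmono hf0 (hmem _) (hmem _) (hmem _)
    (norm_roundResidue_add_le k₁ k₂)
end

section
/- With the setup of the static Green's function: H self-adjoint, HΨ = EΨ, H − E ≥ 0, A and B operators with AΨ, A*Ψ, BΨ, B*Ψ ⊥ Ψ, the identity ⟨[A*,B]⟩ = ⟨⟨A*,[H,B]⟩⟩ holds, and consequently |⟨[A*,B]⟩|² ≤ ⟨⟨A*,A⟩⟩·⟨[B*,[H,B]]⟩. -/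
/-! Put `K = H - E`, so that `[H, B] = [K, B]`, `KΨ = 0` and `K R = R K = 1 - |Ψ⟩⟨Ψ|`. As `BΨ` and
`B*Ψ` are orthogonal to `Ψ`, `R` undoes `K` on `[K, B]Ψ = K BΨ` and on `K B*Ψ`, so the two terms of
`⟨⟨A*, [H, B]⟩⟩` collapse to `⟨AΨ, BΨ⟩` and `-⟨B*Ψ, A*Ψ⟩`, whose sum is `⟨[A*, B]⟩`.

For the inequality, `K ≥ 0` and `RΨ = 0` give `R ≥ 0`, so `(x, y) ↦ ⟨x, R y⟩` obeys Cauchy–Schwarz.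
The two terms are `⟨AΨ, R v⟩` and `-⟨v', R A*Ψ⟩` with `v = K BΨ`, `v' = K B*Ψ`; bounding each by
Cauchy–Schwarz and the sum by `(√(a₁c₁) + √(a₂c₂))² ≤ (a₁ + a₂)(c₁ + c₂)` gives the claim, because
`a₁ + a₂ = ⟨⟨A*, A⟩⟩` and `c₁ + c₂ = ⟨v, R v⟩ + ⟨v', R v'⟩ = ⟨[B*, [H, B]]⟩`. -/

open ContinuousLinearMap
open scoped InnerProductSpace

theorem commutator_sub_smul_one {𝕜 A : Type*} [CommSemiring 𝕜] [Ring A] [Algebra 𝕜 A]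
    (h b : A) (c : 𝕜) : (h - c • 1) * b - b * (h - c • 1) = h * b - b * h := by
  rw [sub_mul, mul_sub, smul_one_mul, mul_smul_one]
  abel

theorem norm_add_sq_le_of_norm_sq_le_mul {E : Type*} [SeminormedAddGroup E] {z₁ z₂ : E}
    {a₁ a₂ c₁ c₂ : ℝ} (ha₁ : 0 ≤ a₁) (ha₂ : 0 ≤ a₂) (hc₁ : 0 ≤ c₁) (hc₂ : 0 ≤ c₂)
    (h₁ : ‖z₁‖ ^ 2 ≤ a₁ * c₁) (h₂ : ‖z₂‖ ^ 2 ≤ a₂ * c₂) :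
    ‖z₁ + z₂‖ ^ 2 ≤ (a₁ + a₂) * (c₁ + c₂) := by
  have hz₁ := norm_nonneg z₁
  have hz₂ := norm_nonneg z₂
  have cross : 2 * (‖z₁‖ * ‖z₂‖) ≤ a₁ * c₂ + a₂ * c₁ := by
    refine (pow_le_pow_iff_left₀ (by positivity) (by positivity) two_ne_zero).mp ?_
    nlinarith [sq_nonneg (a₁ * c₂ - a₂ * c₁), mul_le_mul h₁ h₂ (by positivity) (by positivity)]
  calc ‖z₁ + z₂‖ ^ 2 ≤ (‖z₁‖ + ‖z₂‖) ^ 2 := pow_le_pow_left₀ (norm_nonneg _) (norm_add_le _ _) 2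
    _ ≤ (a₁ + a₂) * (c₁ + c₂) := by nlinarith

theorem IsSelfAdjoint.inner_left_eq_inner_right {𝕜 E : Type*} [RCLike 𝕜] [NormedAddCommGroup E]
    [InnerProductSpace 𝕜 E] [CompleteSpace E] {T : E →L[𝕜] E} (hT : IsSelfAdjoint T) (x y : E) :
    ⟪T x, y⟫_𝕜 = ⟪x, T y⟫_𝕜 :=
  hT.isSymmetric x y

section

variable {V : Type*} [NormedAddCommGroup V] [InnerProductSpace ℂ V]

theorem commutator_apply_of_apply_eq_zero {K : V →L[ℂ] V} {Ψ : V} (hKΨ : K Ψ = 0)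
    (B : V →L[ℂ] V) : (K * B - B * K) Ψ = K (B Ψ) := by
  simp [hKΨ]

variable [CompleteSpace V]

theorem ContinuousLinearMap.IsPositive.norm_inner_apply_sq_le {R : V →L[ℂ] V} (hR : R.IsPositive)
    (x y : V) : ‖⟪x, R y⟫_ℂ‖ ^ 2 ≤ (⟪x, R x⟫_ℂ).re * (⟪y, R y⟫_ℂ).re := by
  obtain ⟨S, rfl⟩ :=
    CStarAlgebra.nonneg_iff_eq_star_mul_self.mp ((nonneg_iff_isPositive R).mpr hR)
  have inner_eq (x y : V) : ⟪x, (star S * S) y⟫_ℂ = ⟪S x, S y⟫_ℂ := by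
    rw [star_eq_adjoint, mul_apply_eq_comp, adjoint_inner_right]
  simp only [inner_eq, ← RCLike.re_to_complex, inner_self_eq_norm_sq, ← mul_pow]
  exact pow_le_pow_left₀ (norm_nonneg _) (norm_inner_le_norm _ _) 2

/-- The pairing `⟨⟨X, Y⟩⟩` of the static Green's function, `R` standing for the reduced resolvent
`(H - E)⁻¹` on `{Ψ}ᗮ`. -/
noncomputable def greenPairing (R : V →L[ℂ] V) (Ψ : V) (X Y : V →L[ℂ] V) : ℂ :=
  ⟪Ψ, (X * R * Y) Ψ⟫_ℂ + ⟪Ψ, (Y * R * X) Ψ⟫_ℂ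

theorem greenPairing_adjoint_self (R X : V →L[ℂ] V) (Ψ : V) :
    greenPairing R Ψ (adjoint X) X = ⟪X Ψ, R (X Ψ)⟫_ℂ + ⟪adjoint X Ψ, R (adjoint X Ψ)⟫_ℂ := by
  rw [greenPairing, mul_apply_eq_comp, mul_apply_eq_comp, mul_apply_eq_comp, mul_apply_eq_comp,
    adjoint_inner_right X, ← adjoint_inner_left X]

theorem isPositive_sub_smul_one {H : V →L[ℂ] V} (hH : IsSelfAdjoint H) {E : ℝ}
    (hpos : ∀ x : V, 0 ≤ (⟪x, H x⟫_ℂ).re - E * ‖x‖ ^ 2) : (H - (E : ℂ) • 1).IsPositive := by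
  have hE : IsSelfAdjoint ((E : ℂ) • (1 : V →L[ℂ] V)) :=
    IsSelfAdjoint.smul (Complex.conj_ofReal E) (IsSelfAdjoint.one _)
  refine ⟨(hH.sub hE).isSymmetric, fun x => ?_⟩
  have hEx : ⟪x, (E : ℂ) • x⟫_ℂ = ((E * ‖x‖ ^ 2 : ℝ) : ℂ) := by
    rw [inner_smul_right, inner_self_eq_norm_sq_to_K, Complex.ofReal_mul, Complex.ofReal_pow]
    rfl
  rw [reApplyInnerSelf, ← inner_re_symm, sub_apply, inner_sub_right, smul_apply, one_apply_eq_self,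
    hEx, map_sub, RCLike.re_to_complex, RCLike.re_to_complex, Complex.ofReal_re]
  exact hpos x

section ReducedResolvent

variable {K R : V →L[ℂ] V} {Ψ : V}

theorem resolvent_apply_apply_of_inner_eq_zero (hK : IsSelfAdjoint K) (hR : IsSelfAdjoint R)
    (hKR : ∀ x, K (R x) = x - ⟪Ψ, x⟫_ℂ • Ψ) {x : V} (hx : ⟪Ψ, x⟫_ℂ = 0) : R (K x) = x := by
  refine ext_inner_left ℂ fun w => ?_
  rw [← hR.inner_left_eq_inner_right, ← hK.inner_left_eq_inner_right, hKR, inner_sub_left,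
    inner_smul_left, hx, mul_zero, sub_zero]

theorem isPositive_resolvent (hK : K.IsPositive) (hR : IsSelfAdjoint R) (hRΨ : R Ψ = 0)
    (hKR : ∀ x, K (R x) = x - ⟪Ψ, x⟫_ℂ • Ψ) : R.IsPositive := by
  refine ⟨hR.isSymmetric, fun x => ?_⟩
  have hRxΨ : ⟪R x, Ψ⟫_ℂ = 0 := by rw [hR.inner_left_eq_inner_right, hRΨ, inner_zero_right]
  have hRx : ⟪R x, x⟫_ℂ = ⟪R x, K (R x)⟫_ℂ :=
    calc ⟪R x, x⟫_ℂ = ⟪R x, K (R x) + ⟪Ψ, x⟫_ℂ • Ψ⟫_ℂ := by rw [hKR, sub_add_cancel]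
      _ = ⟪R x, K (R x)⟫_ℂ := by rw [inner_add_right, inner_smul_right, hRxΨ, mul_zero, add_zero]
  rw [reApplyInnerSelf, hRx]
  exact hK.re_inner_nonneg_right (R x)

theorem inner_commutator_apply_of_apply_eq_zero (hK : IsSelfAdjoint K) (hKΨ : K Ψ = 0)
    (B : V →L[ℂ] V) (z : V) : ⟪Ψ, (K * B - B * K) z⟫_ℂ = -⟪K (adjoint B Ψ), z⟫_ℂ := by
  rw [sub_apply, mul_apply_eq_comp, mul_apply_eq_comp, inner_sub_right,
    ← hK.inner_left_eq_inner_right, hKΨ, inner_zero_left, zero_sub, hK.inner_left_eq_inner_right,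
    adjoint_inner_left]

theorem inner_adjoint_mul_resolvent_mul_commutator (hKΨ : K Ψ = 0) (A B : V →L[ℂ] V) :
    ⟪Ψ, (adjoint A * R * (K * B - B * K)) Ψ⟫_ℂ = ⟪A Ψ, R (K (B Ψ))⟫_ℂ := by
  rw [mul_apply_eq_comp, mul_apply_eq_comp, adjoint_inner_right,
    commutator_apply_of_apply_eq_zero hKΨ]

theorem inner_commutator_mul_resolvent_mul_adjoint (hK : IsSelfAdjoint K) (hKΨ : K Ψ = 0)
    (A B : V →L[ℂ] V) :
    ⟪Ψ, ((K * B - B * K) * R * adjoint A) Ψ⟫_ℂ = -⟪K (adjoint B Ψ), R (adjoint A Ψ)⟫_ℂ := by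
  rw [mul_apply_eq_comp, mul_apply_eq_comp, inner_commutator_apply_of_apply_eq_zero hK hKΨ]

theorem inner_commutator_eq_greenPairing (hK : IsSelfAdjoint K) (hR : IsSelfAdjoint R)
    (hKΨ : K Ψ = 0) (hKR : ∀ x, K (R x) = x - ⟪Ψ, x⟫_ℂ • Ψ) (A B : V →L[ℂ] V) (hB : ⟪Ψ, B Ψ⟫_ℂ = 0)
    (hB' : ⟪Ψ, adjoint B Ψ⟫_ℂ = 0) :
    ⟪Ψ, (adjoint A * B - B * adjoint A) Ψ⟫_ℂ = greenPairing R Ψ (adjoint A) (K * B - B * K) := by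
  rw [greenPairing, inner_adjoint_mul_resolvent_mul_commutator hKΨ,
    inner_commutator_mul_resolvent_mul_adjoint hK hKΨ, ← hR.inner_left_eq_inner_right (K _),
    resolvent_apply_apply_of_inner_eq_zero hK hR hKR hB,
    resolvent_apply_apply_of_inner_eq_zero hK hR hKR hB', sub_apply, mul_apply_eq_comp,
    mul_apply_eq_comp, inner_sub_right, adjoint_inner_right, adjoint_inner_left, sub_eq_add_neg]

theorem norm_inner_commutator_sq_le_greenPairing_mul (hK : IsSelfAdjoint K) (hR : R.IsPositive)
    (hKΨ : K Ψ = 0) (hKR : ∀ x, K (R x) = x - ⟪Ψ, x⟫_ℂ • Ψ) (A B : V →L[ℂ] V) (hB : ⟪Ψ, B Ψ⟫_ℂ = 0)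
    (hB' : ⟪Ψ, adjoint B Ψ⟫_ℂ = 0) :
    ‖⟪Ψ, (adjoint A * B - B * adjoint A) Ψ⟫_ℂ‖ ^ 2 ≤
      (greenPairing R Ψ (adjoint A) A).re *
      (⟪Ψ, (adjoint B * (K * B - B * K) - (K * B - B * K) * adjoint B) Ψ⟫_ℂ).re := by
  have hRv : R (K (B Ψ)) = B Ψ :=
    resolvent_apply_apply_of_inner_eq_zero hK hR.isSelfAdjoint hKR hB
  have hRv' : R (K (adjoint B Ψ)) = adjoint B Ψ :=
    resolvent_apply_apply_of_inner_eq_zero hK hR.isSelfAdjoint hKR hB'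
  have green_B : ⟪Ψ, (adjoint B * (K * B - B * K) - (K * B - B * K) * adjoint B) Ψ⟫_ℂ =
      ⟪R (K (B Ψ)), K (B Ψ)⟫_ℂ + ⟪K (adjoint B Ψ), R (K (adjoint B Ψ))⟫_ℂ := by
    rw [hRv, hRv', sub_apply, mul_apply_eq_comp, mul_apply_eq_comp, inner_sub_right,
      adjoint_inner_right, inner_commutator_apply_of_apply_eq_zero hK hKΨ,
      commutator_apply_of_apply_eq_zero hKΨ, sub_neg_eq_add]
  rw [inner_commutator_eq_greenPairing hK hR.isSelfAdjoint hKΨ hKR A B hB hB', greenPairing,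
    inner_adjoint_mul_resolvent_mul_commutator hKΨ,
    inner_commutator_mul_resolvent_mul_adjoint hK hKΨ, greenPairing_adjoint_self, green_B,
    hR.isSelfAdjoint.inner_left_eq_inner_right, Complex.add_re, Complex.add_re]
  refine norm_add_sq_le_of_norm_sq_le_mul (hR.re_inner_nonneg_right _)
    (hR.re_inner_nonneg_right _) (hR.re_inner_nonneg_right _) (hR.re_inner_nonneg_right _)
    (hR.norm_inner_apply_sq_le _ _) ?_
  rw [norm_neg, mul_comm]
  exact hR.norm_inner_apply_sq_le _ _

end ReducedResolvent

end

theorem stmt_10_general {V : Type*} [NormedAddCommGroup V] [InnerProductSpace ℂ V]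
    [CompleteSpace V] (H R A B : V →L[ℂ] V) (E : ℝ) (Ψ : V)
    (hH : IsSelfAdjoint H) (hground : H Ψ = (E : ℂ) • Ψ)
    (hpos : ∀ x : V, 0 ≤ ((inner ℂ x (H x) : ℂ)).re - E * ‖x‖ ^ 2)
    (hR : IsSelfAdjoint R) (hRΨ : R Ψ = 0)
    (hRres : ∀ x : V, (H - (E : ℂ) • (1 : V →L[ℂ] V)) (R x) = x - (inner ℂ Ψ x : ℂ) • Ψ)
    (hB : (inner ℂ Ψ (B Ψ) : ℂ) = 0) (hB' : (inner ℂ Ψ ((adjoint B) Ψ) : ℂ) = 0) :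
    ((inner ℂ Ψ (((adjoint A) * B - B * (adjoint A)) Ψ) : ℂ) =
      (inner ℂ Ψ (((adjoint A) * R * (H * B - B * H)) Ψ) : ℂ) +
      (inner ℂ Ψ (((H * B - B * H) * R * (adjoint A)) Ψ) : ℂ)) ∧
    ‖(inner ℂ Ψ (((adjoint A) * B - B * (adjoint A)) Ψ) : ℂ)‖ ^ 2 ≤
      ((inner ℂ Ψ (((adjoint A) * R * A) Ψ) : ℂ) + (inner ℂ Ψ ((A * R * (adjoint A)) Ψ) : ℂ)).re *
      ((inner ℂ Ψ (((adjoint B) * (H * B - B * H) - (H * B - B * H) * (adjoint B)) Ψ) : ℂ)).re := by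
  have hK : (H - (E : ℂ) • 1).IsPositive := isPositive_sub_smul_one hH hpos
  have hKΨ : (H - (E : ℂ) • 1) Ψ = 0 := by
    rw [sub_apply, smul_apply, one_apply_eq_self, hground, sub_self]
  rw [← commutator_sub_smul_one H B (E : ℂ)]
  have hRpos : R.IsPositive := isPositive_resolvent hK hR hRΨ hRres
  exact ⟨inner_commutator_eq_greenPairing hK.isSelfAdjoint hR hKΨ hRres A B hB hB',
    norm_inner_commutator_sq_le_greenPairing_mul hK.isSelfAdjoint hRpos hKΨ hRres A B hB hB'⟩

/-- With `H` self-adjoint, `HΨ = EΨ`, `H − E ≥ 0`, reduced resolvent `R = (H−E)⁻¹` on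
`{Ψ}^⊥`, and `AΨ, A*Ψ, BΨ, B*Ψ ⊥ Ψ`, one has the identity
`⟨[A*,B]⟩ = ⟨⟨A*,[H,B]⟩⟩` and consequently
`|⟨[A*,B]⟩|² ≤ ⟨⟨A*,A⟩⟩ · ⟨[B*,[H,B]]⟩`. -/
theorem stmt_10 {V : Type*} [NormedAddCommGroup V] [InnerProductSpace ℂ V]
    [CompleteSpace V] (H R A B : V →L[ℂ] V) (E : ℝ) (Ψ : V) (hΨ : ‖Ψ‖ = 1)
    (hH : IsSelfAdjoint H) (hground : H Ψ = (E : ℂ) • Ψ)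
    (hpos : ∀ x : V, 0 ≤ ((inner ℂ x (H x) : ℂ)).re - E * ‖x‖ ^ 2)
    (hR : IsSelfAdjoint R) (hRΨ : R Ψ = 0)
    (hRres : ∀ x : V, (H - (E : ℂ) • (1 : V →L[ℂ] V)) (R x) = x - (inner ℂ Ψ x : ℂ) • Ψ)
    (hA : (inner ℂ Ψ (A Ψ) : ℂ) = 0) (hA' : (inner ℂ Ψ ((adjoint A) Ψ) : ℂ) = 0)
    (hB : (inner ℂ Ψ (B Ψ) : ℂ) = 0) (hB' : (inner ℂ Ψ ((adjoint B) Ψ) : ℂ) = 0) :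
    ((inner ℂ Ψ (((adjoint A) * B - B * (adjoint A)) Ψ) : ℂ) =
      (inner ℂ Ψ (((adjoint A) * R * (H * B - B * H)) Ψ) : ℂ) +
      (inner ℂ Ψ (((H * B - B * H) * R * (adjoint A)) Ψ) : ℂ)) ∧
    ‖(inner ℂ Ψ (((adjoint A) * B - B * (adjoint A)) Ψ) : ℂ)‖ ^ 2 ≤
      ((inner ℂ Ψ (((adjoint A) * R * A) Ψ) : ℂ) + (inner ℂ Ψ ((A * R * (adjoint A)) Ψ) : ℂ)).re *
      ((inner ℂ Ψ (((adjoint B) * (H * B - B * H) - (H * B - B * H) * (adjoint B)) Ψ) : ℂ)).re :=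
  stmt_10_general H R A B E Ψ hH hground hpos hR hRΨ hRres hB hB'
end

section
/- (Feynman bound) Let H be self-adjoint and bounded below with ground state Ψ, HΨ = EΨ. Let A be an operator and let ε := inf spec(H restricted to the smallest H-invariant closed subspace containing AΨ and A*Ψ) − E. Then ε ≤ ⟨[A*,[H,A]]⟩ / ⟨[A*,A]₊⟩, provided ⟨[A*,A]₊⟩ > 0. -/
/-!
Since `HΨ = EΨ` and `H` is self-adjoint, `⟨[A*,[H,A]]⟩` splits as
`⟨AΨ, (H - E) AΨ⟩ + ⟨A*Ψ, (H - E) A*Ψ⟩`, while `⟨[A*,A]₊⟩ = ‖AΨ‖² + ‖A*Ψ‖²`.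
Both `AΨ` and `A*Ψ` lie in `K`, on which `ε` bounds the Rayleigh quotient of `H - E` from
below, so `⟨x, (H - E) x⟩ ≥ ε ‖x‖²` there; adding the two bounds gives the claim.
-/

open ContinuousLinearMap

section

variable {V : Type*} [NormedAddCommGroup V] [InnerProductSpace ℂ V]

lemma re_inner_sub_smul_self (H : V →L[ℂ] V) (E : ℝ) (x : V) :
    (inner ℂ x (H x - (E : ℂ) • x)).re = (inner ℂ x (H x)).re - E * ‖x‖ ^ 2 := by
  rw [inner_sub_right, inner_smul_right, Complex.sub_re, Complex.re_ofReal_mul,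
    ← inner_self_eq_norm_sq (𝕜 := ℂ)]
  rfl

lemma mul_norm_sq_le_of_mem_lowerBounds {H : V →L[ℂ] V} {K : Submodule ℂ V} {E ε : ℝ}
    (hε : ε ∈ lowerBounds {r : ℝ | ∃ x ∈ K, ‖x‖ = 1 ∧ r = (inner ℂ x (H x)).re - E})
    {x : V} (hx : x ∈ K) :
    ε * ‖x‖ ^ 2 ≤ (inner ℂ x (H x - (E : ℂ) • x)).re := by
  rcases eq_or_ne x 0 with rfl | hx0
  · simp
  have hpos : 0 < ‖x‖ := norm_pos_iff.mpr hx0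
  set u : V := ((‖x‖⁻¹ : ℝ) : ℂ) • x
  have hu : ‖u‖ = 1 := by simp [u, norm_smul, hpos.ne']
  have hscale : (inner ℂ u (H u)).re - E = (inner ℂ x (H x - (E : ℂ) • x)).re / ‖x‖ ^ 2 := by
    rw [re_inner_sub_smul_self]
    simp only [u, map_smul, inner_smul_left, inner_smul_right, Complex.conj_ofReal]
    rw [← mul_assoc, ← Complex.ofReal_mul, Complex.re_ofReal_mul]
    field_simp
  have := hε ⟨u, K.smul_mem _ hx, hu, rfl⟩
  rwa [hscale, le_div_iff₀ (by positivity)] at this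

variable [CompleteSpace V]

lemma re_inner_anticommutator_adjoint_self (A : V →L[ℂ] V) (Ψ : V) :
    (inner ℂ Ψ ((adjoint A * A + A * adjoint A) Ψ)).re = ‖A Ψ‖ ^ 2 + ‖adjoint A Ψ‖ ^ 2 := by
  rw [apply_norm_sq_eq_inner_adjoint_right, apply_norm_sq_eq_inner_adjoint_right (adjoint A),
    adjoint_adjoint, add_apply, inner_add_right, Complex.add_re]
  rfl

lemma inner_double_commutator_eq {H : V →L[ℂ] V} (hH : IsSelfAdjoint H) (A : V →L[ℂ] V)
    {E : ℝ} {Ψ : V} (hΨ : H Ψ = (E : ℂ) • Ψ) :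
    inner ℂ Ψ ((adjoint A * (H * A - A * H) - (H * A - A * H) * adjoint A) Ψ) =
      inner ℂ (A Ψ) (H (A Ψ) - (E : ℂ) • A Ψ) +
        inner ℂ (adjoint A Ψ) (H (adjoint A Ψ) - (E : ℂ) • adjoint A Ψ) := by
  have hΨ_left (y : V) : inner ℂ Ψ (H y) = inner ℂ Ψ ((E : ℂ) • y) := by
    rw [← adjoint_inner_left, hH.adjoint_eq, hΨ, inner_smul_left, inner_smul_right,
      Complex.conj_ofReal]
  have h₁ : inner ℂ Ψ ((adjoint A * (H * A - A * H)) Ψ) =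
      inner ℂ (A Ψ) (H (A Ψ) - (E : ℂ) • A Ψ) := by
    rw [mul_apply_eq_comp, adjoint_inner_right, sub_apply, mul_apply_eq_comp, mul_apply_eq_comp,
      hΨ, map_smul]
  have h₂ : inner ℂ Ψ (((H * A - A * H) * adjoint A) Ψ) =
      -inner ℂ (adjoint A Ψ) (H (adjoint A Ψ) - (E : ℂ) • adjoint A Ψ) := by
    rw [mul_apply_eq_comp, sub_apply, mul_apply_eq_comp, mul_apply_eq_comp, inner_sub_right,
      hΨ_left, ← inner_sub_right, ← map_smul, ← map_sub, ← adjoint_inner_left, inner_sub_right,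
      inner_sub_right, neg_sub]
  rw [sub_apply, inner_sub_right, h₁, h₂, sub_neg_eq_add]

end

theorem stmt_11_general {V : Type*} [NormedAddCommGroup V] [InnerProductSpace ℂ V]
    [CompleteSpace V] (H A : V →L[ℂ] V) (hH : IsSelfAdjoint H) (E ε : ℝ)
    (Ψ : V) (hground : H Ψ = (E : ℂ) • Ψ)
    (K : Submodule ℂ V)
    (hKA : A Ψ ∈ K) (hKA' : (adjoint A) Ψ ∈ K)
    (hε : IsGLB {r : ℝ | ∃ x ∈ K, ‖x‖ = 1 ∧ r = ((inner ℂ x (H x) : ℂ)).re - E} ε)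
    (hden : 0 < ((inner ℂ Ψ (((adjoint A) * A + A * (adjoint A)) Ψ) : ℂ)).re) :
    ε ≤ ((inner ℂ Ψ (((adjoint A) * (H * A - A * H) - (H * A - A * H) * (adjoint A)) Ψ) : ℂ)).re /
      ((inner ℂ Ψ (((adjoint A) * A + A * (adjoint A)) Ψ) : ℂ)).re := by
  rw [inner_double_commutator_eq hH A hground, Complex.add_re, le_div_iff₀ hden,
    re_inner_anticommutator_adjoint_self, mul_add]
  exact add_le_add (mul_norm_sq_le_of_mem_lowerBounds hε.1 hKA)
    (mul_norm_sq_le_of_mem_lowerBounds hε.1 hKA')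

/-- Feynman bound: `H` self-adjoint with ground state `Ψ`, `HΨ = EΨ`; `K` is the smallest
closed `H`-invariant subspace containing `AΨ` and `A*Ψ`; `ε = inf spec(H|_K) − E`
(expressed via the infimum of the Rayleigh quotients on `K`).  Then
`ε ≤ ⟨[A*,[H,A]]⟩ / ⟨[A*,A]₊⟩`, provided `⟨[A*,A]₊⟩ > 0`. -/
theorem stmt_11 {V : Type*} [NormedAddCommGroup V] [InnerProductSpace ℂ V]
    [CompleteSpace V] (H A : V →L[ℂ] V) (hH : IsSelfAdjoint H) (E ε : ℝ)
    (Ψ : V) (hΨ : ‖Ψ‖ = 1) (hground : H Ψ = (E : ℂ) • Ψ)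
    (K : Submodule ℂ V) (hKclosed : IsClosed (K : Set V))
    (hKA : A Ψ ∈ K) (hKA' : (adjoint A) Ψ ∈ K) (hKinv : ∀ x ∈ K, H x ∈ K)
    (hKmin : ∀ K' : Submodule ℂ V, IsClosed (K' : Set V) → A Ψ ∈ K' →
      (adjoint A) Ψ ∈ K' → (∀ x ∈ K', H x ∈ K') → K ≤ K')
    (hε : IsGLB {r : ℝ | ∃ x ∈ K, ‖x‖ = 1 ∧ r = ((inner ℂ x (H x) : ℂ)).re - E} ε)
    (hden : 0 < ((inner ℂ Ψ (((adjoint A) * A + A * (adjoint A)) Ψ) : ℂ)).re) :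
    ε ≤ ((inner ℂ Ψ (((adjoint A) * (H * A - A * H) - (H * A - A * H) * (adjoint A)) Ψ) : ℂ)).re /
      ((inner ℂ Ψ (((adjoint A) * A + A * (adjoint A)) Ψ) : ℂ)).re :=
  stmt_11_general H A hH E ε Ψ hground K hKA hKA' hε hden
end

section
/- (Wagner-type bound) With H, Ψ, E, ε as in the Feynman bound setup and additionally AΨ, A*Ψ ⊥ Ψ, one has ε² ≤ ⟨[A*,[H,A]]⟩ / ⟨⟨A*,A⟩⟩, where ⟨⟨A*,A⟩⟩ := ⟨A*(H−E)⁻¹A⟩ + ⟨A(H−E)⁻¹A*⟩ with the reduced resolvent. -/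
/-!
Write `T = H - E`. Minimality of `K` gives `K ⊥ Ψ`, and since `ker T = ℂΨ`, the reduced resolvent
`R` maps `K` into itself with `T R = 1` there. For `φ ∈ K` and `u = Rφ` the spectral bound on `K`
gives `ε‖u‖² ≤ re⟪u, Tu⟫ = re⟪φ, u⟫ ≤ ‖u‖‖φ‖`, hence `ε² re⟪φ, Rφ⟫ ≤ ε‖φ‖² ≤ re⟪φ, Tφ⟫`.
Taking `φ = AΨ` and `φ = A*Ψ` and adding, the right-hand sides sum to `⟨[A*,[H,A]]⟩`
because `HΨ = EΨ`.
-/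

open ContinuousLinearMap
open scoped InnerProductSpace

section

variable {V : Type*} [NormedAddCommGroup V] [InnerProductSpace ℂ V]

theorem re_inner_sub_smul_one_apply (H : V →L[ℂ] V) (E : ℝ) (x : V) :
    (⟪x, (H - (E : ℂ) • (1 : V →L[ℂ] V)) x⟫_ℂ).re = (⟪x, H x⟫_ℂ).re - E * ‖x‖ ^ 2 := by
  simp [← inner_self_eq_norm_sq (𝕜 := ℂ)]

theorem mul_norm_sq_le_re_inner_of_mem_lowerBounds {T : V →L[ℂ] V} {K : Submodule ℂ V} {ε : ℝ}
    (hε : ε ∈ lowerBounds {r : ℝ | ∃ x ∈ K, ‖x‖ = 1 ∧ r = (⟪x, T x⟫_ℂ).re}) {x : V}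
    (hx : x ∈ K) : ε * ‖x‖ ^ 2 ≤ (⟪x, T x⟫_ℂ).re := by
  rcases eq_or_ne x 0 with rfl | hx0
  · simp
  have hnorm : 0 < ‖x‖ := norm_pos_iff.mpr hx0
  set c : ℂ := ((‖x‖⁻¹ : ℝ) : ℂ)
  have hunit : ‖c • x‖ = 1 := by simp [c, norm_smul, hnorm.ne']
  have hscale : (⟪c • x, T (c • x)⟫_ℂ).re = (⟪x, T x⟫_ℂ).re / ‖x‖ ^ 2 := by
    rw [map_smul, inner_smul_left, inner_smul_right, ← mul_assoc, Complex.conj_ofReal,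
      ← Complex.ofReal_mul, Complex.re_ofReal_mul]
    field_simp
  have hbound := hε ⟨c • x, K.smul_mem c hx, hunit, rfl⟩
  rwa [hscale, le_div_iff₀ (by positivity)] at hbound

theorem sq_mul_re_inner_le {T : V →L[ℂ] V} {ε : ℝ} (hε : 0 ≤ ε) {u : V}
    (hu : ε * ‖u‖ ^ 2 ≤ (⟪u, T u⟫_ℂ).re) (hTu : ε * ‖T u‖ ^ 2 ≤ (⟪T u, T (T u)⟫_ℂ).re) :
    ε ^ 2 * (⟪T u, u⟫_ℂ).re ≤ (⟪T u, T (T u)⟫_ℂ).re := by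
  have hlower : ε * ‖u‖ ^ 2 ≤ (⟪T u, u⟫_ℂ).re := by rwa [← inner_conj_symm, Complex.conj_re]
  have hupper : (⟪T u, u⟫_ℂ).re ≤ ‖u‖ * ‖T u‖ :=
    (Complex.re_le_norm _).trans ((norm_inner_le_norm _ _).trans_eq (mul_comm _ _))
  nlinarith [sq_nonneg (ε * ‖u‖ - ‖T u‖)]

variable [CompleteSpace V]

theorem IsSelfAdjoint.apply_mem_orthogonal {T : V →L[ℂ] V} (hT : IsSelfAdjoint T)
    {U : Submodule ℂ V} (hU : ∀ x ∈ U, T x ∈ U) : ∀ x ∈ Uᗮ, T x ∈ Uᗮ := by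
  have := orthogonal_mem_invtSubmodule (T := T) (U := U) (by
    rwa [hT.adjoint_eq, Module.End.mem_invtSubmodule_iff_forall_mem_of_mem])
  rwa [Module.End.mem_invtSubmodule_iff_forall_mem_of_mem] at this

theorem IsSelfAdjoint.apply_mem_orthogonal_singleton {T : V →L[ℂ] V} (hT : IsSelfAdjoint T)
    {Ψ : V} {c : ℂ} (hΨ : T Ψ = c • Ψ) : ∀ x ∈ (ℂ ∙ Ψ)ᗮ, T x ∈ (ℂ ∙ Ψ)ᗮ :=
  hT.apply_mem_orthogonal fun x hx => by
    obtain ⟨a, rfl⟩ := Submodule.mem_span_singleton.mp hx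
    rw [map_smul, hΨ, smul_smul]
    exact Submodule.smul_mem _ _ (Submodule.mem_span_singleton_self Ψ)

theorem IsSelfAdjoint.ker_le_span_singleton {T R : V →L[ℂ] V} (hT : IsSelfAdjoint T) {Ψ : V}
    (hTΨ : T Ψ = 0) (hTR : ∀ x, T (R x) = x - ⟪Ψ, x⟫_ℂ • Ψ) : T.ker ≤ ℂ ∙ Ψ := by
  intro v hv
  set w := v - ⟪Ψ, v⟫_ℂ • Ψ
  have hw_range : w ∈ T.range := ⟨R v, hTR v⟩
  have hw_ker : w ∈ T.rangeᗮ := by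
    rw [orthogonal_range, hT.adjoint_eq]
    simpa [w, hTΨ] using hv
  have hw0 : w = 0 := Submodule.disjoint_def.mp (Submodule.orthogonal_disjoint _) w hw_range hw_ker
  exact Submodule.mem_span_singleton.mpr ⟨_, (sub_eq_zero.mp hw0).symm⟩

theorem IsSelfAdjoint.mem_of_apply_mem_of_mem_orthogonal_ker {T : V →L[ℂ] V}
    (hT : IsSelfAdjoint T) {K : Submodule ℂ V} [K.HasOrthogonalProjection]
    (hK : ∀ x ∈ K, T x ∈ K) {u : V} (hTu : T u ∈ K) (hu : u ∈ T.kerᗮ) : u ∈ K := by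
  obtain ⟨u₁, hu₁, u₂, hu₂, rfl⟩ := K.exists_add_mem_mem_orthogonal u
  have hTu₂ : T u₂ = 0 := by
    have hTu₂K : T u₂ ∈ K := by simpa using K.sub_mem hTu (hK u₁ hu₁)
    exact Submodule.disjoint_def.mp K.orthogonal_disjoint _ hTu₂K
      (hT.apply_mem_orthogonal hK u₂ hu₂)
  have hu₂0 : u₂ = 0 := by
    have h := Submodule.inner_right_of_mem_orthogonal (LinearMap.mem_ker.mpr hTu₂) hu
    rwa [inner_add_right, Submodule.inner_left_of_mem_orthogonal hu₁ hu₂, zero_add,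
      inner_self_eq_zero] at h
  simpa [hu₂0] using hu₁

theorem IsSelfAdjoint.sq_mul_re_inner_reducedResolvent_le {T R : V →L[ℂ] V}
    (hT : IsSelfAdjoint T) (hR : IsSelfAdjoint R) {Ψ : V} (hTΨ : T Ψ = 0) (hRΨ : R Ψ = 0)
    (hTR : ∀ x, T (R x) = x - ⟪Ψ, x⟫_ℂ • Ψ) {K : Submodule ℂ V} [K.HasOrthogonalProjection]
    (hK : ∀ x ∈ K, T x ∈ K) (hKΨ : K ≤ (ℂ ∙ Ψ)ᗮ) {ε : ℝ} (hε : 0 ≤ ε)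
    (hspec : ∀ x ∈ K, ε * ‖x‖ ^ 2 ≤ (⟪x, T x⟫_ℂ).re) {φ : V} (hφ : φ ∈ K) :
    ε ^ 2 * (⟪φ, R φ⟫_ℂ).re ≤ (⟪φ, T φ⟫_ℂ).re := by
  have hTRφ : T (R φ) = φ := by
    simpa [Submodule.mem_orthogonal_singleton_iff_inner_right.mp (hKΨ hφ)] using hTR φ
  have hRφ_perp : R φ ∈ (ℂ ∙ Ψ)ᗮ := Submodule.mem_orthogonal_singleton_iff_inner_right.mpr
    (by rw [← adjoint_inner_left, hR.adjoint_eq, hRΨ, inner_zero_left])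
  have hTRφK : T (R φ) ∈ K := by rwa [hTRφ]
  have hRφ : R φ ∈ K := hT.mem_of_apply_mem_of_mem_orthogonal_ker hK hTRφK
    (Submodule.orthogonal_le (hT.ker_le_span_singleton hTΨ hTR) hRφ_perp)
  simpa [hTRφ] using sq_mul_re_inner_le hε (hspec _ hRφ) (hspec _ hTRφK)

theorem IsSelfAdjoint.inner_double_commutator {H : V →L[ℂ] V} (hH : IsSelfAdjoint H) {E : ℝ}
    {Ψ : V} (hΨ : H Ψ = (E : ℂ) • Ψ) (A : V →L[ℂ] V) :
    ⟪Ψ, (adjoint A * (H * A - A * H) - (H * A - A * H) * adjoint A) Ψ⟫_ℂ =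
      ⟪A Ψ, (H - (E : ℂ) • 1) (A Ψ)⟫_ℂ + ⟪adjoint A Ψ, (H - (E : ℂ) • 1) (adjoint A Ψ)⟫_ℂ := by
  have hHΨ : ∀ y, ⟪Ψ, H y⟫_ℂ = E * ⟪Ψ, y⟫_ℂ := fun y => by
    rw [← adjoint_inner_left, hH.adjoint_eq, hΨ, inner_smul_left, Complex.conj_ofReal]
  have hAΨ : ∀ y, ⟪Ψ, A y⟫_ℂ = ⟪adjoint A Ψ, y⟫_ℂ := fun y => (adjoint_inner_left A y Ψ).symm
  simp only [sub_apply, mul_apply_eq_comp, smul_apply, one_apply_eq_self, inner_sub_right,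
    inner_smul_right, adjoint_inner_right, hΨ, map_smul, hHΨ, hAΨ]
  ring

end

theorem stmt_12_general {V : Type*} [NormedAddCommGroup V] [InnerProductSpace ℂ V]
    [CompleteSpace V] (H R A : V →L[ℂ] V) (hH : IsSelfAdjoint H) (E ε : ℝ)
    (Ψ : V) (hground : H Ψ = (E : ℂ) • Ψ)
    (hpos : ∀ x : V, 0 ≤ ((inner ℂ x (H x) : ℂ)).re - E * ‖x‖ ^ 2)
    (hR : IsSelfAdjoint R) (hRΨ : R Ψ = 0)
    (hRres : ∀ x : V, (H - (E : ℂ) • (1 : V →L[ℂ] V)) (R x) = x - (inner ℂ Ψ x : ℂ) • Ψ)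
    (hA : (inner ℂ Ψ (A Ψ) : ℂ) = 0) (hA' : (inner ℂ Ψ ((adjoint A) Ψ) : ℂ) = 0)
    (K : Submodule ℂ V) (hKclosed : IsClosed (K : Set V))
    (hKA : A Ψ ∈ K) (hKA' : (adjoint A) Ψ ∈ K) (hKinv : ∀ x ∈ K, H x ∈ K)
    (hKmin : ∀ K' : Submodule ℂ V, IsClosed (K' : Set V) → A Ψ ∈ K' →
      (adjoint A) Ψ ∈ K' → (∀ x ∈ K', H x ∈ K') → K ≤ K')
    (hε : IsGLB {r : ℝ | ∃ x ∈ K, ‖x‖ = 1 ∧ r = ((inner ℂ x (H x) : ℂ)).re - E} ε)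
    (hden : 0 < ((inner ℂ Ψ (((adjoint A) * R * A) Ψ) : ℂ) +
      (inner ℂ Ψ ((A * R * (adjoint A)) Ψ) : ℂ)).re) :
    ε ^ 2 ≤ ((inner ℂ Ψ (((adjoint A) * (H * A - A * H) - (H * A - A * H) * (adjoint A)) Ψ) : ℂ)).re /
      ((inner ℂ Ψ (((adjoint A) * R * A) Ψ) : ℂ) + (inner ℂ Ψ ((A * R * (adjoint A)) Ψ) : ℂ)).re := by
  rw [hH.inner_double_commutator hground, le_div_iff₀ hden]
  have : CompleteSpace K := hKclosed.completeSpace_coe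
  set T := H - (E : ℂ) • (1 : V →L[ℂ] V)
  have hT : IsSelfAdjoint T := hH.sub (IsSelfAdjoint.smul (Complex.conj_ofReal E) (.one _))
  have hTΨ : T Ψ = 0 := by simp [T, hground]
  have hKT : ∀ x ∈ K, T x ∈ K := fun x hx => K.sub_mem (hKinv x hx) (K.smul_mem _ hx)
  have hKΨ : K ≤ (ℂ ∙ Ψ)ᗮ := hKmin _ (Submodule.isClosed_orthogonal _)
    (Submodule.mem_orthogonal_singleton_iff_inner_right.mpr hA)
    (Submodule.mem_orthogonal_singleton_iff_inner_right.mpr hA')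
    (hH.apply_mem_orthogonal_singleton hground)
  have hε0 : 0 ≤ ε := hε.2 fun r ⟨x, _, hx, hr⟩ => by simpa [hr, hx] using hpos x
  have hspec : ∀ x ∈ K, ε * ‖x‖ ^ 2 ≤ (⟪x, T x⟫_ℂ).re := fun x hx =>
    mul_norm_sq_le_re_inner_of_mem_lowerBounds (fun r ⟨y, hy, hy1, hr⟩ =>
      hε.1 ⟨y, hy, hy1, by rw [hr, re_inner_sub_smul_one_apply, hy1]; ring⟩) hx
  have hbound : ∀ φ ∈ K, ε ^ 2 * (⟪φ, R φ⟫_ℂ).re ≤ (⟪φ, T φ⟫_ℂ).re := fun φ hφ =>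
    hT.sq_mul_re_inner_reducedResolvent_le hR hTΨ hRΨ hRres hKT hKΨ hε0 hspec hφ
  simp only [mul_apply_eq_comp, adjoint_inner_right]
  rw [← adjoint_inner_left A (R (adjoint A Ψ)) Ψ, Complex.add_re, Complex.add_re]
  linarith [hbound _ hKA, hbound _ hKA']

/-- Wagner-type bound: with `H` self-adjoint, `HΨ = EΨ`, `H − E ≥ 0`, reduced resolvent
`R = (H−E)⁻¹` on `{Ψ}^⊥`, `AΨ, A*Ψ ⊥ Ψ`, and `ε = inf spec(H|_K) − E` where `K` is the
smallest closed `H`-invariant subspace containing `AΨ` and `A*Ψ`, one has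
`ε² ≤ ⟨[A*,[H,A]]⟩ / ⟨⟨A*,A⟩⟩`. -/
theorem stmt_12 {V : Type*} [NormedAddCommGroup V] [InnerProductSpace ℂ V]
    [CompleteSpace V] (H R A : V →L[ℂ] V) (hH : IsSelfAdjoint H) (E ε : ℝ)
    (Ψ : V) (hΨ : ‖Ψ‖ = 1) (hground : H Ψ = (E : ℂ) • Ψ)
    (hpos : ∀ x : V, 0 ≤ ((inner ℂ x (H x) : ℂ)).re - E * ‖x‖ ^ 2)
    (hR : IsSelfAdjoint R) (hRΨ : R Ψ = 0)
    (hRres : ∀ x : V, (H - (E : ℂ) • (1 : V →L[ℂ] V)) (R x) = x - (inner ℂ Ψ x : ℂ) • Ψ)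
    (hA : (inner ℂ Ψ (A Ψ) : ℂ) = 0) (hA' : (inner ℂ Ψ ((adjoint A) Ψ) : ℂ) = 0)
    (K : Submodule ℂ V) (hKclosed : IsClosed (K : Set V))
    (hKA : A Ψ ∈ K) (hKA' : (adjoint A) Ψ ∈ K) (hKinv : ∀ x ∈ K, H x ∈ K)
    (hKmin : ∀ K' : Submodule ℂ V, IsClosed (K' : Set V) → A Ψ ∈ K' →
      (adjoint A) Ψ ∈ K' → (∀ x ∈ K', H x ∈ K') → K ≤ K')
    (hε : IsGLB {r : ℝ | ∃ x ∈ K, ‖x‖ = 1 ∧ r = ((inner ℂ x (H x) : ℂ)).re - E} ε)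
    (hden : 0 < ((inner ℂ Ψ (((adjoint A) * R * A) Ψ) : ℂ) +
      (inner ℂ Ψ ((A * R * (adjoint A)) Ψ) : ℂ)).re) :
    ε ^ 2 ≤ ((inner ℂ Ψ (((adjoint A) * (H * A - A * H) - (H * A - A * H) * (adjoint A)) Ψ) : ℂ)).re /
      ((inner ℂ Ψ (((adjoint A) * R * A) Ψ) : ℂ) + (inner ℂ Ψ ((A * R * (adjoint A)) Ψ) : ℂ)).re :=
  stmt_12_general H R A hH E ε Ψ hground hpos hR hRΨ hRres hA hA' K hKclosed hKA hKA' hKinv hKmin hε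
    hden
end
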